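/- arXiv:1612.02816 — 2 statements merged into one kernel-verified Lean document; each statement's English description precedes it below -/
import Mathlib

section
/- In an ideal generalized category C, for every element f the element f ⊢ f is the identity 1_f of f; in particular every element of C (including identities themselves) has an identity. -/
universe u v w

/-- A generalized category (Schoenbaum): a set with a partial order `le`,
source and target operators, a (partially meaningful) composition, and identities.
Composition `comp a b` is *defined* (meaningful) iff `le (src a) (tgt b)`;
all axioms are stated conditionally on definedness. -/
structure GenCat (α : Type u) where
  le : α → α → Prop
  src : α → α
  tgt : α → α
  comp : α → α → α
  ident : α → α
  le_refl : ∀ a, le a a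
  le_trans : ∀ {a b c}, le a b → le b c → le a c
  le_antisymm : ∀ {a b}, le a b → le b a → a = b
  src_comp : ∀ {a b}, le (src a) (tgt b) → src (comp a b) = src b
  tgt_comp : ∀ {a b}, le (src a) (tgt b) → tgt (comp a b) = tgt a
  assoc : ∀ {a b c},
      (le (src a) (tgt b) ∧ le (src (comp a b)) (tgt c)) ∨
      (le (src b) (tgt c) ∧ le (src a) (tgt (comp b c))) →
      comp (comp a b) c = comp a (comp b c)
  src_ident : ∀ a, src (ident a) = a
  tgt_ident : ∀ a, tgt (ident a) = a
  ident_comp : ∀ {a c}, le (src (ident a)) (tgt c) → comp (ident a) c = c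
  comp_ident : ∀ {a c}, le (src c) (tgt (ident a)) → comp c (ident a) = c
  ident_unique : ∀ {a b}, src b = a → tgt b = a →
      (∀ c, le (src b) (tgt c) → comp b c = c) →
      (∀ c, le (src c) (tgt b) → comp c b = c) → b = ident a
  obj_comp : ∀ {a b}, src a = a → tgt a = a → le (src a) (tgt b) → comp a b = b
  comp_obj : ∀ {a b}, src a = a → tgt a = a → le (src b) (tgt a) → comp b a = b
  le_src : ∀ {a b}, le a b → le (src a) (src b)
  le_tgt : ∀ {a b}, le a b → le (tgt a) (tgt b)
  le_comp : ∀ {a b c d}, le a b → le c d → le (src a) (tgt c) → le (src b) (tgt d) →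
      le (comp a c) (comp b d)
  le_ident : ∀ {a b}, le a b → le (ident a) (ident b)

namespace GenCat

variable {α : Type u} {β : Type v}

/-- `𝒞.D a b` : the composite `a · b` is defined. -/
def D (𝒞 : GenCat α) (a b : α) : Prop := 𝒞.le (𝒞.src a) (𝒞.tgt b)

/-- A subject of a generalized category. -/
def Subj (𝒞 : GenCat α) (a : α) : Prop := ∃ f, 𝒞.src f = a ∨ 𝒞.tgt f = a

/-- An object of a generalized category. -/
def Obj (𝒞 : GenCat α) (a : α) : Prop := 𝒞.src a = a ∧ 𝒞.tgt a = a

end GenCat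

/-- The hom-set `hom(a,b)` of a generalized category. -/
def homSub {α : Type u} (𝒞 : GenCat α) (a b : α) : Type u :=
  {u : α // 𝒞.src u = a ∧ 𝒞.tgt u = b}

/-- A functor (structure preserving map) between generalized categories,
stated on the underlying function. -/
def IsGFunctor {α : Type u} {β : Type v} (𝒞 : GenCat α) (𝒟 : GenCat β)
    (F : α → β) : Prop :=
  (∀ a b, 𝒞.D a b → F (𝒞.comp a b) = 𝒟.comp (F a) (F b)) ∧
  (∀ a, F (𝒞.src a) = 𝒟.src (F a)) ∧
  (∀ a, F (𝒞.tgt a) = 𝒟.tgt (F a))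

/-- A natural transformation `θ : F → G` between functors of generalized
categories: for every `f`, the composite `θ(t f) · F f = G f · θ(s f)` is
defined and the equality holds. -/
def IsGNatTrans {α : Type u} {β : Type v} (𝒞 : GenCat α) (𝒟 : GenCat β)
    (F G : α → β) (θ : α → β) : Prop :=
  ∀ f : α,
    𝒟.D (θ (𝒞.tgt f)) (F f) ∧
    𝒟.D (G f) (θ (𝒞.src f)) ∧
    𝒟.comp (θ (𝒞.tgt f)) (F f) = 𝒟.comp (G f) (θ (𝒞.src f))

/-- A bundled functor between generalized categories. -/
structure GenFunctor {α : Type u} {β : Type v} (𝒞 : GenCat α) (𝒟 : GenCat β) where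
  toFun : α → β
  map_comp : ∀ {a b}, 𝒞.D a b → toFun (𝒞.comp a b) = 𝒟.comp (toFun a) (toFun b)
  map_src : ∀ a, toFun (𝒞.src a) = 𝒟.src (toFun a)
  map_tgt : ∀ a, toFun (𝒞.tgt a) = 𝒟.tgt (toFun a)
/-- An ideal (generalized) category: a generalized category together with a set
`V` of valid elements, a set `K` of constants, and a turnstile operation
`turn a b` (written `a ⊢ b` in the paper), the type with source `a` and
target `b`. -/
structure IdealCat (α : Type u) extends GenCat α where
  V : Set α
  K : Set α
  turn : α → α → α
  src_turn : ∀ f g, src (turn f g) = f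
  tgt_turn : ∀ f g, tgt (turn f g) = g
  /-- `f · (g ⊢ s f) = g ⊢ t f` unless `g = s f` (then it is `f`), unless `f`
  or the type is a constant. -/
  comp_turn : ∀ f g, f ∉ K → turn g (src f) ∉ K →
      (g ≠ src f → comp f (turn g (src f)) = turn g (tgt f)) ∧
      (g = src f → comp f (turn g (src f)) = f)
  /-- `(t g ⊢ f) · g = s g ⊢ f` unless `f = t g` (then it is `g`). -/
  turn_comp : ∀ f g,
      (f ≠ tgt g → comp (turn (tgt g) f) g = turn (src g) f) ∧
      (f = tgt g → comp (turn (tgt g) (tgt g)) g = g)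
  V_comp : ∀ {f g}, le (src g) (tgt f) → g ∈ V → f ∈ V → comp g f ∈ V
  turn_self_V : ∀ f, turn f f ∈ V
  witness_V : ∀ {u}, u ∈ V → turn (src u) (tgt u) ∈ V

/-- Core data and equational axioms of an ideal cartesian closed category
(everything except the existence of good pairs and good evaluations). -/
structure ICCCCore (α : Type u) extends IdealCat α where
  top : α
  wedge : α → α → α
  pair : α → α → α
  star : α → α
  top_V : top ∈ V
  top_K : top ∈ K
  wedge_K : ∀ {a b}, a ∈ K → b ∈ K → wedge a b ∈ K
  pair_K : ∀ {a b}, a ∈ K → b ∈ K → pair a b ∈ K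
  star_K : ∀ {a}, a ∈ K → star a ∈ K
  src_top : src top = top
  tgt_top : tgt top = top
  src_wedge : ∀ a b, src (wedge a b) = wedge (src a) (src b)
  tgt_wedge : ∀ a b, tgt (wedge a b) = wedge (tgt a) (tgt b)
  src_pair : ∀ {a b}, src a = src b → src (pair a b) = src a
  tgt_pair : ∀ {a b}, src a = src b → tgt (pair a b) = wedge (tgt a) (tgt b)
  src_star : ∀ {a u v}, src a = wedge u v → src (star a) = u
  tgt_star : ∀ {a u v}, src a = wedge u v → tgt (star a) = turn v (tgt a)
  wedge_V : ∀ {a b}, a ∈ V → b ∈ V → wedge a b ∈ V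
  pair_V : ∀ {a b}, a ∈ V → b ∈ V → pair a b ∈ V
  star_V : ∀ {a}, a ∈ V → star a ∈ V
  ter_V : ∀ {a}, (∃ f, src f = a ∨ tgt f = a) → turn a top ∈ V
  proj_fst_V : ∀ {a b}, (∃ f, src f = a ∨ tgt f = a) → (∃ f, src f = b ∨ tgt f = b) →
      turn (wedge a b) a ∈ V
  proj_snd_V : ∀ {a b}, (∃ f, src f = a ∨ tgt f = a) → (∃ f, src f = b ∨ tgt f = b) →
      turn (wedge a b) b ∈ V
  eval_V : ∀ {a b}, (∃ f, src f = a ∨ tgt f = a) → (∃ f, src f = b ∨ tgt f = b) →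
      turn (wedge (turn a b) a) b ∈ V
  /-- every arrow `f : a → ⊤` equals `a ⊢ ⊤`. -/
  terminal_eq : ∀ {f a}, src f = a → tgt f = top → f = turn a top

namespace ICCCCore

variable {α : Type u}

/-- definedness of the pairing `⟨f, g⟩`. -/
def PairD (𝒞 : ICCCCore α) (f g : α) : Prop := 𝒞.src f = 𝒞.src g

/-- definedness of `f*`: the source of `f` is a wedge of two subjects. -/
def StarD (𝒞 : ICCCCore α) (f : α) : Prop :=
  ∃ u v, 𝒞.toGenCat.Subj u ∧ 𝒞.toGenCat.Subj v ∧ 𝒞.src f = 𝒞.wedge u v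

/-- `(p, p')` is a good pair for the pair of subjects `(a, b)`. -/
def GoodPair (𝒞 : ICCCCore α) (a b p p' : α) : Prop :=
  p ∈ 𝒞.V ∧ p' ∈ 𝒞.V ∧
  𝒞.src p = 𝒞.wedge a b ∧ 𝒞.tgt p = a ∧
  𝒞.src p' = 𝒞.wedge a b ∧ 𝒞.tgt p' = b ∧
  (∀ f g, 𝒞.PairD f g → 𝒞.toGenCat.D p (𝒞.pair f g) →
      𝒞.comp p (𝒞.pair f g) = f) ∧
  (∀ f g, 𝒞.PairD f g → 𝒞.toGenCat.D p' (𝒞.pair f g) →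
      𝒞.comp p' (𝒞.pair f g) = g) ∧
  (∀ f, 𝒞.toGenCat.D p f → 𝒞.toGenCat.D p' f →
      𝒞.pair (𝒞.comp p f) (𝒞.comp p' f) = f) ∧
  (∀ f g, 𝒞.toGenCat.D f p → 𝒞.toGenCat.D g p' →
      𝒞.pair (𝒞.comp f p) (𝒞.comp g p') = 𝒞.wedge f g)

/-- `e` is a good evaluation for the good pair `(p, p')` for `(a, b)`. -/
def GoodEval (𝒞 : ICCCCore α) (a b p p' e : α) : Prop :=
  e ∈ 𝒞.V ∧
  𝒞.src e = 𝒞.wedge (𝒞.turn a b) a ∧ 𝒞.tgt e = b ∧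
  ∀ c q q' f, 𝒞.GoodPair c a q q' →
    (𝒞.StarD f → 𝒞.toGenCat.D (𝒞.star f) q →
      𝒞.PairD (𝒞.comp (𝒞.star f) q) q' →
      𝒞.toGenCat.D e (𝒞.pair (𝒞.comp (𝒞.star f) q) q') →
      𝒞.comp e (𝒞.pair (𝒞.comp (𝒞.star f) q) q') = f) ∧
    (𝒞.toGenCat.D f q → 𝒞.PairD (𝒞.comp f q) q' →
      𝒞.toGenCat.D e (𝒞.pair (𝒞.comp f q) q') →
      𝒞.StarD (𝒞.comp e (𝒞.pair (𝒞.comp f q) q')) →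
      𝒞.star (𝒞.comp e (𝒞.pair (𝒞.comp f q) q')) = f)

end ICCCCore

/-- An ideal cartesian closed category. -/
structure ICCC (α : Type u) extends ICCCCore α where
  goodPair_exists : ∀ {a b}, toGenCat.Subj a → toGenCat.Subj b →
      ∃ p p', toICCCCore.GoodPair a b p p'
  goodEval_exists : ∀ {a b p p'}, toICCCCore.GoodPair a b p p' →
      ∃ e, toICCCCore.GoodEval a b p p' e

/-- A morphism of ideal cartesian closed categories. -/
structure ICCCHom {α : Type u} {β : Type v} (𝒞 : ICCC α) (𝒟 : ICCC β) where
  toFun : α → β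
  map_comp : ∀ {a b}, 𝒞.toGenCat.D a b →
      toFun (𝒞.comp a b) = 𝒟.comp (toFun a) (toFun b)
  map_src : ∀ a, toFun (𝒞.src a) = 𝒟.src (toFun a)
  map_tgt : ∀ a, toFun (𝒞.tgt a) = 𝒟.tgt (toFun a)
  map_V : ∀ {a}, a ∈ 𝒞.V → toFun a ∈ 𝒟.V
  map_turn : ∀ a b, toFun (𝒞.turn a b) = 𝒟.turn (toFun a) (toFun b)
  map_top : toFun 𝒞.top = 𝒟.top
  map_wedge : ∀ a b, toFun (𝒞.wedge a b) = 𝒟.wedge (toFun a) (toFun b)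
  map_pair : ∀ {a b}, 𝒞.src a = 𝒞.src b →
      toFun (𝒞.pair a b) = 𝒟.pair (toFun a) (toFun b)
  map_goodPair : ∀ {a b p p'}, 𝒞.toICCCCore.GoodPair a b p p' →
      𝒟.toICCCCore.GoodPair (toFun a) (toFun b) (toFun p) (toFun p')

/-- In an ideal generalized category `C`, for every element `f`
the element `f ⊢ f` is the identity `1_f` of `f`; in particular every element
of `C` (including identities themselves) has an identity. -/
theorem stmt3 {α : Type u} (I : IdealCat α) (f : α) :
    I.turn f f = I.ident f ∧
    I.src (I.turn f f) = f ∧ I.tgt (I.turn f f) = f ∧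
    (∀ c, I.toGenCat.D (I.turn f f) c → I.comp (I.turn f f) c = c) ∧
    (∀ c, I.toGenCat.D c (I.turn f f) → I.comp c (I.turn f f) = c) := by
  have h1 : I.comp (I.turn f f) (I.ident f) = I.ident f := by
    have := (I.turn_comp f (I.ident f)).2
    rw [I.tgt_ident] at this
    exact this rfl
  have h2 : I.comp (I.turn f f) (I.ident f) = I.turn f f := by
    apply I.comp_ident
    rw [I.src_turn, I.tgt_ident]
    exact I.le_refl f
  have key : I.turn f f = I.ident f := by rw [← h2, h1]
  refine ⟨key, ?_, ?_, ?_, ?_⟩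
  · exact I.src_turn f f
  · exact I.tgt_turn f f
  · intro c hc
    rw [key] at hc ⊢
    exact I.ident_comp hc
  · intro c hc
    rw [key] at hc ⊢
    exact I.comp_ident hc
end

section
/- Every generalized typed deductive system A on which there is defined an equivalence relation =, and a distinguished subset K of constants, satisfying: (1) f·(s(f) ⊢ g) = t(f) ⊢ g unless s(f) = g, in which case f·(s(f) ⊢ g) = f, unless f or s(f) ⊢ g is constant; (2) (f ⊢ t(g))·g = f ⊢ s(g) unless f = t(g), in which case (f ⊢ t(g))·g = g; (3) (hg)f = h(gf) for all composable f, g, h; (4) a = b implies s(a) = s(b); (5) a = b implies t(a) = t(b); (6) a = b implies ca = cb and ac = bc for all composable c; (7) a = b implies a ⊢ c = b ⊢ c and c ⊢ a = c ⊢ b for all c — is an ideal generalized category (in particular a generalized category), taking V to be the valid paths of A. -/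
universe u v w

/-- A generalized typed deductive system: a generalized graph with a
(partially meaningful) composition `comp a b` (defined iff `tgt b = src a`),
a turnstile `vdash a b` (the type with source `a` and target `b`), and a set
`V` of valid paths. -/
structure DedSys (α : Type u) where
  src : α → α
  tgt : α → α
  comp : α → α → α
  vdash : α → α → α
  V : Set α
  src_comp : ∀ {a b}, tgt b = src a → src (comp a b) = src b
  tgt_comp : ∀ {a b}, tgt b = src a → tgt (comp a b) = tgt a
  src_vdash : ∀ a b, src (vdash a b) = a
  tgt_vdash : ∀ a b, tgt (vdash a b) = b
  vdash_self_V : ∀ a, vdash a a ∈ V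
  V_comp : ∀ {a b}, tgt b = src a → a ∈ V → b ∈ V → comp a b ∈ V
  inhabit_V : ∀ {u}, u ∈ V → vdash (src u) (tgt u) ∈ V

section Aux
variable {α : Type u}

private lemma obj_eq (A : DedSys α)
    (h2 : ∀ f g, (f ≠ A.tgt g → A.comp (A.vdash (A.tgt g) f) g = A.vdash (A.src g) f) ∧
      (f = A.tgt g → A.comp (A.vdash (A.tgt g) (A.tgt g)) g = g))
    (h3 : ∀ f g h, A.tgt f = A.src g → A.tgt g = A.src h →
      A.comp (A.comp h g) f = A.comp h (A.comp g f))
    {a : α} (hs : A.src a = a) (ht : A.tgt a = a) : a = A.vdash a a := by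
  by_cases hq : ∀ q : α, q = a
  · exact (hq (A.vdash a a)).symm
  · push_neg at hq
    obtain ⟨q, hqa⟩ := hq
    have i : A.comp (A.vdash a q) a = A.vdash a q := by
      have := (h2 q a).1 (by rw [ht]; exact hqa)
      rwa [ht, hs] at this
    have ii : A.comp (A.vdash q a) (A.vdash a q) = A.vdash a a := by
      have := (h2 a (A.vdash a q)).1 (by rw [A.tgt_vdash]; exact fun h => hqa h.symm)
      rwa [A.tgt_vdash, A.src_vdash] at this
    have iii : A.comp (A.comp (A.vdash q a) (A.vdash a q)) a
        = A.comp (A.vdash q a) (A.comp (A.vdash a q) a) :=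
      h3 a (A.vdash a q) (A.vdash q a) (by rw [ht, A.src_vdash])
        (by rw [A.tgt_vdash, A.src_vdash])
    have iv : A.comp (A.vdash a a) a = a := by
      have := (h2 (A.tgt a) a).2 rfl
      rwa [ht] at this
    calc a = A.comp (A.vdash a a) a := iv.symm
      _ = A.comp (A.comp (A.vdash q a) (A.vdash a q)) a := by rw [ii]
      _ = A.comp (A.vdash q a) (A.comp (A.vdash a q) a) := iii
      _ = A.comp (A.vdash q a) (A.vdash a q) := by rw [i]
      _ = A.vdash a a := ii

private lemma runit (A : DedSys α)
    (h2 : ∀ f g, (f ≠ A.tgt g → A.comp (A.vdash (A.tgt g) f) g = A.vdash (A.src g) f) ∧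
      (f = A.tgt g → A.comp (A.vdash (A.tgt g) (A.tgt g)) g = g))
    (h3 : ∀ f g h, A.tgt f = A.src g → A.tgt g = A.src h →
      A.comp (A.comp h g) f = A.comp h (A.comp g f))
    (c : α) : A.comp c (A.vdash (A.src c) (A.src c)) = c := by
  by_cases htc : A.tgt c = c
  · by_cases hac : A.src c = c
    · -- src c = c = tgt c
      have hc : c = A.vdash c c := obj_eq A h2 h3 hac htc
      rw [hac]
      calc A.comp c (A.vdash c c) = A.comp (A.vdash c c) c := by rw [← hc]
        _ = c := by have := (h2 (A.tgt c) c).2 rfl; rwa [htc] at this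
    · -- tgt c = c, src c ≠ c
      have i : A.comp (A.vdash c (A.src c)) c = A.vdash (A.src c) (A.src c) := by
        have := (h2 (A.src c) c).1 (by rw [htc]; exact hac)
        rwa [htc] at this
      have ii : A.comp (A.vdash (A.src c) c) (A.vdash c (A.src c)) = A.vdash c c := by
        have := (h2 c (A.vdash c (A.src c))).1
          (by rw [A.tgt_vdash]; exact fun h => hac h.symm)
        rwa [A.tgt_vdash, A.src_vdash] at this
      have iii : A.comp (A.vdash (A.src c) c) (A.vdash (A.src c) (A.src c)) = c := by
        calc A.comp (A.vdash (A.src c) c) (A.vdash (A.src c) (A.src c))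
            = A.comp (A.vdash (A.src c) c) (A.comp (A.vdash c (A.src c)) c) := by rw [i]
          _ = A.comp (A.comp (A.vdash (A.src c) c) (A.vdash c (A.src c))) c :=
              (h3 c (A.vdash c (A.src c)) (A.vdash (A.src c) c)
                (by rw [A.src_vdash]; exact htc) (by rw [A.tgt_vdash, A.src_vdash])).symm
          _ = A.comp (A.vdash c c) c := by rw [ii]
          _ = c := by have := (h2 (A.tgt c) c).2 rfl; rwa [htc] at this
      have iv : A.comp (A.vdash (A.src c) (A.src c)) (A.vdash (A.src c) (A.src c))
          = A.vdash (A.src c) (A.src c) := by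
        have := (h2 (A.tgt (A.vdash (A.src c) (A.src c))) (A.vdash (A.src c) (A.src c))).2 rfl
        rwa [A.tgt_vdash] at this
      calc A.comp c (A.vdash (A.src c) (A.src c))
          = A.comp (A.comp (A.vdash (A.src c) c) (A.vdash (A.src c) (A.src c)))
              (A.vdash (A.src c) (A.src c)) := by rw [iii]
        _ = A.comp (A.vdash (A.src c) c)
              (A.comp (A.vdash (A.src c) (A.src c)) (A.vdash (A.src c) (A.src c))) :=
            h3 (A.vdash (A.src c) (A.src c)) (A.vdash (A.src c) (A.src c))
              (A.vdash (A.src c) c)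
              (by rw [A.tgt_vdash, A.src_vdash]) (by rw [A.tgt_vdash, A.src_vdash])
        _ = A.comp (A.vdash (A.src c) c) (A.vdash (A.src c) (A.src c)) := by rw [iv]
        _ = c := iii
  · -- tgt c ≠ c
    have s1 : A.comp (A.vdash (A.tgt c) c) c = A.vdash (A.src c) c :=
      (h2 c c).1 (fun hh => htc hh.symm)
    have s2 : A.comp (A.vdash c (A.tgt c)) (A.vdash (A.tgt c) c)
        = A.vdash (A.tgt c) (A.tgt c) := by
      have := (h2 (A.tgt c) (A.vdash (A.tgt c) c)).1 (by rw [A.tgt_vdash]; exact htc)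
      rwa [A.tgt_vdash, A.src_vdash] at this
    have s3 : A.comp (A.vdash c (A.tgt c)) (A.vdash (A.src c) c) = c := by
      calc A.comp (A.vdash c (A.tgt c)) (A.vdash (A.src c) c)
          = A.comp (A.vdash c (A.tgt c)) (A.comp (A.vdash (A.tgt c) c) c) := by rw [s1]
        _ = A.comp (A.comp (A.vdash c (A.tgt c)) (A.vdash (A.tgt c) c)) c :=
            (h3 c (A.vdash (A.tgt c) c) (A.vdash c (A.tgt c))
              (by rw [A.src_vdash]) (by rw [A.tgt_vdash, A.src_vdash])).symm
        _ = A.comp (A.vdash (A.tgt c) (A.tgt c)) c := by rw [s2]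
        _ = c := (h2 (A.tgt c) c).2 rfl
    have s4 : A.comp (A.vdash (A.src c) c) (A.vdash (A.src c) (A.src c))
        = A.vdash (A.src c) c := by
      by_cases hca : c = A.src c
      · have hXe : A.vdash (A.src c) c = A.vdash (A.src c) (A.src c) := by rw [← hca]
        rw [hXe]
        have := (h2 (A.tgt (A.vdash (A.src c) (A.src c))) (A.vdash (A.src c) (A.src c))).2 rfl
        rwa [A.tgt_vdash] at this
      · have := (h2 c (A.vdash (A.src c) (A.src c))).1 (by rw [A.tgt_vdash]; exact hca)
        rwa [A.tgt_vdash, A.src_vdash] at this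
    calc A.comp c (A.vdash (A.src c) (A.src c))
        = A.comp (A.comp (A.vdash c (A.tgt c)) (A.vdash (A.src c) c))
            (A.vdash (A.src c) (A.src c)) := by rw [s3]
      _ = A.comp (A.vdash c (A.tgt c))
            (A.comp (A.vdash (A.src c) c) (A.vdash (A.src c) (A.src c))) :=
          h3 (A.vdash (A.src c) (A.src c)) (A.vdash (A.src c) c) (A.vdash c (A.tgt c))
            (by rw [A.tgt_vdash, A.src_vdash]) (by rw [A.tgt_vdash, A.src_vdash])
      _ = A.comp (A.vdash c (A.tgt c)) (A.vdash (A.src c) c) := by rw [s4]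
      _ = c := s3

end Aux

/-- Every generalized typed deductive system `A` with an equality
relation (here: the equality of the carrier, which is automatically
substitutive in the sense of hypotheses (4)-(7) of the statement) and a
distinguished set `K` of constants, satisfying the two turnstile composition
laws and associativity, is an ideal generalized category (in particular a
generalized category), taking `V` to be the valid paths of `A`, `K` the
constants, the order to be equality, and the turnstile of the ideal category
`f ⊢ g` to be the type with source `f` and target `g`. -/
theorem stmt9 {α : Type u} (A : DedSys α) (K : Set α)
    (h1 : ∀ f g, f ∉ K → A.vdash g (A.src f) ∉ K →
      (g ≠ A.src f → A.comp f (A.vdash g (A.src f)) = A.vdash g (A.tgt f)) ∧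
      (g = A.src f → A.comp f (A.vdash g (A.src f)) = f))
    (h2 : ∀ f g, (f ≠ A.tgt g → A.comp (A.vdash (A.tgt g) f) g = A.vdash (A.src g) f) ∧
      (f = A.tgt g → A.comp (A.vdash (A.tgt g) (A.tgt g)) g = g))
    (h3 : ∀ f g h, A.tgt f = A.src g → A.tgt g = A.src h →
      A.comp (A.comp h g) f = A.comp h (A.comp g f))
    (h4 : ∀ a b : α, a = b → A.src a = A.src b)
    (h5 : ∀ a b : α, a = b → A.tgt a = A.tgt b)
    (h6 : ∀ a b c : α, a = b → A.comp c a = A.comp c b ∧ A.comp a c = A.comp b c)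
    (h7 : ∀ a b c : α, a = b → A.vdash a c = A.vdash b c ∧ A.vdash c a = A.vdash c b) :
    ∃ I : IdealCat α, I.le = Eq ∧ I.src = A.src ∧ I.tgt = A.tgt ∧
      I.comp = A.comp ∧ I.turn = A.vdash ∧ I.V = A.V ∧ I.K = K := by
  refine ⟨{ le := Eq,
              src := A.src,
              tgt := A.tgt,
              comp := A.comp,
              ident := fun a => A.vdash a a,
              le_refl := fun _ => rfl,
              le_trans := fun h h' => h.trans h',
              le_antisymm := fun h _ => h,
              src_comp := fun h => A.src_comp h.symm,
              tgt_comp := fun h => A.tgt_comp h.symm,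
              assoc := by
                rintro a b c (⟨hd1, hd2⟩ | ⟨hd1, hd2⟩)
                · rw [A.src_comp hd1.symm] at hd2
                  exact h3 c b a hd2.symm hd1.symm
                · rw [A.tgt_comp hd1.symm] at hd2
                  exact h3 c b a hd1.symm hd2.symm,
              src_ident := fun a => A.src_vdash a a,
              tgt_ident := fun a => A.tgt_vdash a a,
              ident_comp := by
                intro a c h
                rw [A.src_vdash] at h
                subst h
                exact (h2 (A.tgt c) c).2 rfl,
              comp_ident := by
                intro a c h
                rw [A.tgt_vdash] at h
                subst h
                exact runit A h2 h3 c,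
              ident_unique := by
                intro a b hsb htb _ hr
                have e1 : A.comp (A.vdash a a) b = A.vdash a a :=
                  hr (A.vdash a a) (by rw [A.src_vdash, htb])
                have e2 : A.comp (A.vdash a a) b = b := by
                  have := (h2 (A.tgt b) b).2 rfl
                  rwa [htb] at this
                exact e2.symm.trans e1,
              obj_comp := by
                intro a b hsa hta h
                have htb : A.tgt b = a := by rw [← h, hsa]
                have key : A.comp (A.vdash a a) b = b := by
                  have := (h2 (A.tgt b) b).2 rfl
                  rwa [htb] at this
                have ha : a = A.vdash a a := obj_eq A h2 h3 hsa hta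
                calc A.comp a b = A.comp (A.vdash a a) b := by rw [← ha]
                  _ = b := key,
              comp_obj := by
                intro a b hsa hta h
                have hsb : A.src b = a := by rw [h, hta]
                have ha : a = A.vdash a a := obj_eq A h2 h3 hsa hta
                calc A.comp b a = A.comp b (A.vdash a a) := by rw [← ha]
                  _ = A.comp b (A.vdash (A.src b) (A.src b)) := by rw [hsb]
                  _ = b := runit A h2 h3 b,
              le_src := fun h => congrArg A.src h,
              le_tgt := fun h => congrArg A.tgt h,
              le_comp := by
                intro a b c d hab hcd _ _
                rw [hab, hcd],
              le_ident := by
                intro a b h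
                rw [h],
              V := A.V,
              K := K,
              turn := A.vdash,
              src_turn := A.src_vdash,
              tgt_turn := A.tgt_vdash,
              comp_turn := h1,
              turn_comp := h2,
              V_comp := fun h hg hf => A.V_comp h.symm hg hf,
              turn_self_V := A.vdash_self_V,
              witness_V := fun hu => A.inhabit_V hu },
              rfl, rfl, rfl, rfl, rfl, rfl, rfl⟩
end
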